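/- arXiv:2101.03119 — 6 statements merged into one kernel-verified Lean document; each statement's English description precedes it below -/
import Mathlib

section
/- The maps s_β and s_k satisfy the braid relation: s_β ∘ s_k ∘ s_β = s_k ∘ s_β ∘ s_k as maps on ℚ^n. -/
open Finset

/-- `stdE n m` is the standard basis vector `e_m` (1-based index `m`) of `ℚ^n`. -/
def stdE (n m : ℕ) : Fin n → ℚ := fun j => if (j : ℕ) + 1 = m then 1 else 0

/-- the simple root `α_i = e_{i+1} - e_i` (1-based, for `1 ≤ i ≤ n-1`). -/
def alphaRoot (n i : ℕ) : Fin n → ℚ := stdE n (i + 1) - stdE n i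

/-- the simple root `β = e_1 + ⋯ + e_k`. -/
def betaRoot (n k : ℕ) : Fin n → ℚ := fun j => if (j : ℕ) < k then 1 else 0

/-- the quadratic form `q(x) = Σ x_i² + ((2-k)/k²)(Σ x_i)²`. -/
def qform (n k : ℕ) (x : Fin n → ℚ) : ℚ :=
  (∑ i, (x i) ^ 2) + ((2 - (k : ℚ)) / (k : ℚ) ^ 2) * (∑ i, x i) ^ 2

/-- the inner product obtained as the polarization of `q`. -/
def ip (n k : ℕ) (x y : Fin n → ℚ) : ℚ :=
  (qform n k (x + y) - qform n k x - qform n k y) / 2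

/-- the degree `deg(x) = (x_1 + ⋯ + x_n)/k`. -/
def degv (n k : ℕ) (x : Fin n → ℚ) : ℚ := (∑ i, x i) / (k : ℚ)

/-- `r(x) = x_{k+1} + ⋯ + x_n - 2 deg(x)`. -/
def rco (n k : ℕ) (x : Fin n → ℚ) : ℚ :=
  (∑ i ∈ Finset.univ.filter (fun i : Fin n => k ≤ (i : ℕ)), x i) - 2 * degv n k x

/-- the reflection `s_β : x ↦ x + r(x)·β`. -/
def sBeta (n k : ℕ) (x : Fin n → ℚ) : Fin n → ℚ := x + rco n k x • betaRoot n k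

/-- the map swapping coordinates `a` and `b` (0-based). -/
def sSwap (n : ℕ) (a b : Fin n) (x : Fin n → ℚ) : Fin n → ℚ := x ∘ Equiv.swap a b

/-- The Weyl group: the subgroup of bijections of `ℚ^n` generated by the simple
reflections `s_1, …, s_{n-1}` (as functions: `sSwap` of adjacent coordinates,
0-based) and `s_β` (as a function: `sBeta`). -/
def weyl (n k : ℕ) : Subgroup (Equiv.Perm (Fin n → ℚ)) :=
  Subgroup.closure
    {σ | ⇑σ = sBeta n k ∨ ∃ a b : Fin n, (a : ℕ) + 1 = (b : ℕ) ∧ ⇑σ = sSwap n a b}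

/-- The set of real roots: the orbit `W·β`. -/
def realRoots (n k : ℕ) : Set (Fin n → ℚ) :=
  {x | ∃ σ ∈ weyl n k, σ (betaRoot n k) = x}

/-- `dec x`: the coordinates of `x` rearranged in weakly decreasing order. -/
def dec {n : ℕ} (x : Fin n → ℚ) : Fin n → ℚ := fun i => x (Tuple.sort x i.rev)


/-! Both maps are reflections `z ↦ z - f z • x` with `f x = 2`: `s_β` with root `β` and functional
`-r`, and `s_k` with root `e_{k+1} - e_k` and functional `z ↦ z_{k+1} - z_k`. Each functional
takes the value `-1` on the other root, and for any two reflections with these pairings both sides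
of the braid relation send `z` to `z - (f z + g z) • (x + y)`. -/

namespace Module

variable {R M : Type*} [CommRing R] [AddCommGroup M] [Module R M]

theorem preReflection_braid {x y : M} {f g : Dual R M} (hf : f x = 2) (hg : g y = 2)
    (hfy : f y = -1) (hgx : g x = -1) :
    preReflection x f * preReflection y g * preReflection x f =
      preReflection y g * preReflection x f * preReflection y g := by
  ext z
  simp only [End.mul_apply, preReflection_apply, map_sub, map_smul, hf, hg, hfy, hgx]
  module

end Module

open Module

theorem comp_swap_eq_preReflection {R ι : Type*} [CommRing R] [DecidableEq ι] (a b : ι)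
    (x : ι → R) :
    x ∘ Equiv.swap a b =
      preReflection (Pi.single b 1 - Pi.single a 1)
        (.proj b - .proj a : Dual R (ι → R)) x := by
  ext j
  rcases eq_or_ne a b with rfl | hab
  · simp [preReflection_apply]
  simp only [Function.comp_apply, preReflection_apply, LinearMap.sub_apply, LinearMap.proj_apply,
    Pi.sub_apply, Pi.smul_apply, smul_eq_mul, Pi.single_apply, Equiv.swap_apply_def]
  split_ifs <;> simp_all

def rcoDual (n k : ℕ) : Dual ℚ (Fin n → ℚ) where
  toFun := rco n k
  map_add' x y := by simp only [rco, degv, Pi.add_apply, sum_add_distrib]; ring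
  map_smul' c x := by
    simp only [rco, degv, Pi.smul_apply, smul_eq_mul, ← mul_sum, RingHom.id_apply]; ring

theorem sBeta_eq_preReflection (n k : ℕ) :
    sBeta n k = preReflection (betaRoot n k) (-rcoDual n k) := by
  ext x
  simp [sBeta, preReflection_apply, rcoDual]

theorem sum_betaRoot {n k : ℕ} (hk : k ≤ n) : ∑ i : Fin n, betaRoot n k i = k := by
  simp [betaRoot, sum_boole, Fin.card_filter_val_lt, hk]

theorem rco_betaRoot {n k : ℕ} (hk : 1 ≤ k) (hkn : k ≤ n) : rco n k (betaRoot n k) = -2 := by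
  have hT : ∑ i ∈ univ.filter (fun i : Fin n => k ≤ (i : ℕ)), betaRoot n k i = 0 :=
    sum_eq_zero fun i hi => if_neg (by simpa using hi)
  have hk0 : (k : ℚ) ≠ 0 := by positivity
  simp [rco, degv, hT, sum_betaRoot hkn, hk0]

theorem rco_single_sub_single {n k : ℕ} {a b : Fin n} (ha : (a : ℕ) < k) (hb : k ≤ (b : ℕ)) :
    rco n k (Pi.single b 1 - Pi.single a 1) = 1 := by
  simp [rco, degv, sum_sub_distrib, Finset.sum_pi_single', ha, hb]

theorem sBeta_sK_braid (n k : ℕ) (hk : 1 ≤ k) (hkn : k ≤ n - 1) :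
    sBeta n k ∘ sSwap n ⟨k - 1, by omega⟩ ⟨k, by omega⟩ ∘ sBeta n k =
      sSwap n ⟨k - 1, by omega⟩ ⟨k, by omega⟩ ∘ sBeta n k ∘
        sSwap n ⟨k - 1, by omega⟩ ⟨k, by omega⟩ := by
  set a : Fin n := ⟨k - 1, by omega⟩
  set b : Fin n := ⟨k, by omega⟩
  have hab : a ≠ b := by simp [a, b, Fin.ext_iff]; omega
  let g : Dual ℚ (Fin n → ℚ) := .proj b - .proj a
  have hswap : sSwap n a b = preReflection (Pi.single b 1 - Pi.single a 1) g :=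
    funext (comp_swap_eq_preReflection a b)
  have hβa : betaRoot n k a = 1 := if_pos (by simp [a]; omega)
  have hβb : betaRoot n k b = 0 := if_neg (by simp [b])
  have hf : (-rcoDual n k) (betaRoot n k) = 2 := by
    simp [rcoDual, rco_betaRoot hk (show k ≤ n by omega)]
  have hfy : (-rcoDual n k) (Pi.single b 1 - Pi.single a 1) = -1 := by
    simp [rcoDual, rco_single_sub_single (show (a : ℕ) < k by simp [a]; omega) (b := b) le_rfl]
  have hg : g (Pi.single b 1 - Pi.single a 1) = 2 := by
    norm_num [g, hab, hab.symm]
  have hgx : g (betaRoot n k) = -1 := by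
    simp [g, hβa, hβb]
  rw [hswap, sBeta_eq_preReflection]
  exact congrArg DFunLike.coe (preReflection_braid hf hg hfy hgx)
end

section
/- Let x = (x_1,…,x_n) ∈ ℝ^n and d ∈ ℝ satisfy: d ≥ x_1 ≥ x_2 ≥ … ≥ x_n ≥ 0; x_1 + … + x_n = k·d; and Σ_{i=1}^n x_i² + (2−k)·d² > 0. Then x_{k+1} + x_{k+2} + … + x_n < 2d. -/
/-! Split the coordinates at `a = x_{k+1}`. On the head `x_1, …, x_k` one has `a ≤ x_i ≤ d`, on the
tail `0 ≤ x_i ≤ a`, so bounding each `x_i²` by the chord of `t ↦ t²` over these intervals and using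
`Σ x_i = k d` gives `Σ x_i² ≤ d (x_1 + ⋯ + x_k) = d (k d - T)`, with `T` the tail sum. The hypothesis
then reads `0 < d (2 d - T)`, while `d ≥ 0`. -/

open Finset

lemma sq_le_add_mul_sub_of_mem_Icc {a d t : ℝ} (ht : t ∈ Set.Icc a d) :
    t ^ 2 ≤ (a + d) * t - a * d := by
  nlinarith [mul_nonneg (sub_nonneg.mpr ht.1) (sub_nonneg.mpr ht.2)]

lemma sq_le_mul_of_mem_Icc {a t : ℝ} (ht : t ∈ Set.Icc 0 a) : t ^ 2 ≤ a * t := by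
  rw [sq]
  exact mul_le_mul_of_nonneg_right ht.2 ht.1

lemma sum_sq_le_of_mem_Icc {ι : Type*} [Fintype ι] [DecidableEq ι] (s : Finset ι)
    (x : ι → ℝ) {a d : ℝ} (hs : ∀ i ∈ s, x i ∈ Set.Icc a d) (hsc : ∀ i ∉ s, x i ∈ Set.Icc 0 a) :
    ∑ i, x i ^ 2 ≤ d * ∑ i ∈ s, x i + a * (∑ i, x i - #s * d) := by
  rw [← sum_add_sum_compl s (fun i => x i ^ 2), ← sum_add_sum_compl s x]
  calc ∑ i ∈ s, x i ^ 2 + ∑ i ∈ sᶜ, x i ^ 2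
      ≤ ∑ i ∈ s, ((a + d) * x i - a * d) + ∑ i ∈ sᶜ, a * x i :=
        add_le_add (sum_le_sum fun i hi => sq_le_add_mul_sub_of_mem_Icc (hs i hi))
          (sum_le_sum fun i hi => sq_le_mul_of_mem_Icc (hsc i (mem_compl.mp hi)))
    _ = d * ∑ i ∈ s, x i + a * (∑ i ∈ s, x i + ∑ i ∈ sᶜ, x i - #s * d) := by
        rw [sum_sub_distrib, sum_const, nsmul_eq_mul, ← mul_sum, ← mul_sum]
        ring

theorem tail_sum_lt_two_deg (n k : ℕ) (hkn : k < n)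
    (x : Fin n → ℝ) (d : ℝ)
    (hmono : Antitone x)
    (hx1 : x ⟨0, by omega⟩ ≤ d)
    (hxn : 0 ≤ x ⟨n - 1, by omega⟩)
    (hsum : ∑ i, x i = (k : ℝ) * d)
    (hq : 0 < (∑ i, (x i) ^ 2) + (2 - (k : ℝ)) * d ^ 2) :
    (∑ i ∈ Finset.univ.filter (fun i : Fin n => k ≤ (i : ℕ)), x i) < 2 * d := by
  have hx : ∀ i, x i ∈ Set.Icc 0 d := fun i =>
    ⟨hxn.trans (hmono (Fin.le_iff_val_le_val.mpr (by simp; omega))),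
      (hmono (Fin.mk_le_of_le_val (Nat.zero_le _))).trans hx1⟩
  have hd : 0 ≤ d := (hx ⟨k, hkn⟩).1.trans (hx _).2
  set s := univ.filter (fun i : Fin n => (i : ℕ) < k)
  set T := ∑ i ∈ univ.filter (fun i : Fin n => k ≤ (i : ℕ)), x i
  have hcard : #s = k := by simpa [s, hkn.le] using Fin.card_filter_val_lt (n := n) (m := k)
  have hsq : ∑ i, x i ^ 2 ≤ d * ∑ i ∈ s, x i := by
    have := sum_sq_le_of_mem_Icc s x (a := x ⟨k, hkn⟩)
      (fun i hi => ⟨hmono (Fin.le_iff_val_le_val.mpr (mem_filter.mp hi).2.le), (hx i).2⟩)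
      (fun i hi => ⟨(hx i).1, hmono (Fin.le_iff_val_le_val.mpr (by simpa [s] using hi))⟩)
    rwa [hcard, hsum, sub_self, mul_zero, add_zero] at this
  have hsplit : ∑ i ∈ s, x i + T = k * d := by
    rw [← hsum, ← sum_filter_add_sum_filter_not univ (fun i : Fin n => (i : ℕ) < k) x]
    simp only [s, T, not_lt]
  have hpos : 0 < d * (2 * d - T) := by
    linear_combination hq + hsq + d * hsplit
  exact sub_pos.mp (pos_of_mul_pos_right hpos hd)
end

section
/- For every integer d ≥ 2, the vector γ_d ∈ ℤ^n whose first k−3 coordinates equal d, whose (k−2)-nd coordinate equals d−1, whose coordinates in positions k−1 through k+2d−1 equal 1, and whose remaining coordinates equal 0, is a real root of degree d: γ_d ∈ W·β and deg(γ_d) = d. -/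
open Finset

/-- The root `γ_d`: first `k-3` coordinates equal `d`, coordinate `k-2` equals `d-1`,
coordinates `k-1` through `k+2d-1` equal `1`, the rest are `0` (1-based positions). -/
def gammaRoot (n k d : ℕ) : Fin n → ℚ := fun j =>
  if (j : ℕ) + 1 ≤ k - 3 then (d : ℚ)
  else if (j : ℕ) + 1 = k - 2 then (d : ℚ) - 1
  else if (j : ℕ) + 1 ≤ k + 2 * d - 1 then 1 else 0

/-!
Write `β_m = e_1 + ⋯ + e_m`. Then `γ_d = (d - 2) β_{k-2} + β_{k-3} + β_{k+2d-1}`, which gives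
`deg γ_d = d` and `r(γ_d) = -1`. The Weyl group contains every coordinate permutation, because
adjacent transpositions generate `S_n`. Now `γ_1` is `β` with coordinates `k - 2` and `k + 1`
exchanged, and `γ_{d+1} - β` is `γ_d` with coordinates `k - 1, k` exchanged with
`k + 2d, k + 2d + 1` (positions 1-based, whereas indices in `Fin n` are 0-based). Since
`r(γ_{d+1} - β) = r(γ_{d+1}) + 2 = 1`, the reflection `s_β` maps `γ_{d+1} - β` to `γ_{d+1}`.
-/

open Equiv

theorem Fin.val_swap_apply {n : ℕ} (a b j : Fin n) :
    (swap a b j : ℕ) = if (j : ℕ) = a then (b : ℕ) else if (j : ℕ) = b then (a : ℕ) else j := by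
  simp only [swap_apply_def, ← Fin.ext_iff]
  split_ifs <;> rfl

def coordPerm (α β : Type*) : Perm α →* Perm (α → β) where
  toFun τ := arrowCongr τ (Equiv.refl β)
  map_one' := rfl
  map_mul' _ _ := rfl

theorem coordPerm_apply {α β : Type*} (τ : Perm α) (x : α → β) :
    coordPerm α β τ x = x ∘ τ.symm := rfl

theorem coordPerm_mem_weyl (n k : ℕ) (τ : Perm (Fin n)) :
    coordPerm (Fin n) ℚ τ ∈ weyl n k := by
  cases n with
  | zero => rw [Subsingleton.elim τ 1, map_one]; exact one_mem _
  | succ m =>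
    have hτ : τ ∈ Submonoid.closure (Set.range fun i : Fin m ↦ swap i.castSucc i.succ) := by
      rw [Perm.mclosure_swap_castSucc_succ]; trivial
    refine Submonoid.closure_le (S := (weyl (m + 1) k).toSubmonoid.comap _).2 ?_ hτ
    rintro _ ⟨i, rfl⟩
    refine Subgroup.subset_closure (Or.inr ⟨i.castSucc, i.succ, rfl, ?_⟩)
    funext x
    rw [coordPerm_apply, symm_swap]
    rfl

theorem mem_realRoots_of_mem_weyl {n k : ℕ} {σ : Perm (Fin n → ℚ)} (hσ : σ ∈ weyl n k)
    {x : Fin n → ℚ} (hx : x ∈ realRoots n k) : σ x ∈ realRoots n k := by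
  obtain ⟨ρ, hρ, rfl⟩ := hx
  exact ⟨σ * ρ, mul_mem hσ hρ, rfl⟩

theorem comp_perm_mem_realRoots {n k : ℕ} (τ : Perm (Fin n)) {x : Fin n → ℚ}
    (hx : x ∈ realRoots n k) : x ∘ τ ∈ realRoots n k := by
  simpa [coordPerm_apply] using mem_realRoots_of_mem_weyl (coordPerm_mem_weyl n k τ.symm) hx

theorem sum_betaRoot_s11 {n m : ℕ} (hm : m ≤ n) : ∑ j, betaRoot n m j = m := by
  simp only [betaRoot, Finset.sum_boole, Nat.cast_inj]
  rw [Fin.card_filter_val_lt, min_eq_right hm]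

theorem sum_tail_betaRoot {n m : ℕ} (k : ℕ) (hm : m ≤ n) :
    ∑ j ∈ univ.filter (fun j : Fin n => k ≤ (j : ℕ)), betaRoot n m j = (m - k : ℕ) := by
  simp only [Finset.sum_filter, betaRoot]
  rw [Fin.sum_univ_eq_sum_range
    (fun j => if k ≤ j then (if j < m then (1 : ℚ) else 0) else 0), ← Finset.sum_filter,
    Finset.sum_boole, Finset.filter_filter, Nat.cast_inj, ← Nat.card_Ico]
  congr 1
  ext j
  simp only [mem_filter, mem_range, mem_Ico]
  omega

theorem degv_betaRoot {n k : ℕ} (hk : k ≠ 0) (hkn : k ≤ n) : degv n k (betaRoot n k) = 1 := by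
  rw [degv, sum_betaRoot_s11 hkn, div_self (Nat.cast_ne_zero.2 hk)]

theorem rco_add_smul_betaRoot {n k : ℕ} (hk : k ≠ 0) (hkn : k ≤ n) (x : Fin n → ℚ) (c : ℚ) :
    rco n k (x + c • betaRoot n k) = rco n k x - 2 * c := by
  have hβ := degv_betaRoot hk hkn
  simp only [rco, degv, Pi.add_apply, Pi.smul_apply, smul_eq_mul, sum_add_distrib,
    ← mul_sum, sum_tail_betaRoot k hkn, Nat.sub_self, Nat.cast_zero] at hβ ⊢
  rw [add_div, mul_div_assoc, hβ]
  ring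

theorem sBeta_involutive {n k : ℕ} (hk : k ≠ 0) (hkn : k ≤ n) :
    Function.Involutive (sBeta n k) := by
  intro x
  rw [sBeta, sBeta, rco_add_smul_betaRoot hk hkn, add_assoc, ← add_smul,
    show rco n k x + (rco n k x - 2 * rco n k x) = 0 by ring, zero_smul, add_zero]

theorem sBeta_mem_realRoots {n k : ℕ} (hk : k ≠ 0) (hkn : k ≤ n) {x : Fin n → ℚ}
    (hx : x ∈ realRoots n k) : sBeta n k x ∈ realRoots n k :=
  mem_realRoots_of_mem_weyl (σ := (sBeta_involutive hk hkn).toPerm _)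
    (Subgroup.subset_closure (Or.inl rfl)) hx

theorem sBeta_sub_betaRoot {n k : ℕ} (hk : k ≠ 0) (hkn : k ≤ n) {x : Fin n → ℚ}
    (hx : rco n k x = -1) : sBeta n k (x - betaRoot n k) = x := by
  rw [sBeta, sub_eq_add_neg, ← neg_one_smul ℚ (betaRoot n k), rco_add_smul_betaRoot hk hkn, hx,
    add_assoc, ← add_smul]
  norm_num

theorem gammaRoot_eq {n k : ℕ} (d : ℕ) (hk : 3 ≤ k) :
    gammaRoot n k d =
      ((d : ℚ) - 2) • betaRoot n (k - 2) + betaRoot n (k - 3) + betaRoot n (k + 2 * d - 1) := by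
  funext j
  simp only [gammaRoot, betaRoot, Pi.add_apply, Pi.smul_apply, smul_eq_mul]
  split_ifs <;> first | ring1 | (exfalso; omega)

theorem degv_gammaRoot {n k d : ℕ} (hk : 3 ≤ k) (hn : k + 2 * d - 1 ≤ n) :
    degv n k (gammaRoot n k d) = d := by
  rw [degv, gammaRoot_eq d hk]
  simp only [Pi.add_apply, Pi.smul_apply, smul_eq_mul, sum_add_distrib, ← mul_sum,
    sum_betaRoot_s11 (n := n) (m := k - 2) (by omega), sum_betaRoot_s11 (n := n) (m := k - 3) (by omega),
    sum_betaRoot_s11 hn]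
  have hk0 : (k : ℚ) ≠ 0 := by positivity
  field_simp
  push_cast [Nat.cast_sub (show 2 ≤ k by omega), Nat.cast_sub (show 3 ≤ k by omega),
    Nat.cast_sub (show 1 ≤ k + 2 * d by omega)]
  ring

theorem rco_gammaRoot {n k d : ℕ} (hk : 3 ≤ k) (hd : 1 ≤ d) (hn : k + 2 * d - 1 ≤ n) :
    rco n k (gammaRoot n k d) = -1 := by
  rw [rco, degv_gammaRoot hk hn, gammaRoot_eq d hk]
  simp only [Pi.add_apply, Pi.smul_apply, smul_eq_mul, sum_add_distrib, ← mul_sum,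
    sum_tail_betaRoot (n := n) (m := k - 2) k (by omega),
    sum_tail_betaRoot (n := n) (m := k - 3) k (by omega), sum_tail_betaRoot k hn]
  rw [show k - 2 - k = 0 by omega, show k - 3 - k = 0 by omega,
    show k + 2 * d - 1 - k = 2 * d - 1 by omega]
  push_cast [Nat.cast_sub (show 1 ≤ 2 * d by omega)]
  ring

theorem betaRoot_comp_swap {n k : ℕ} (hk : 3 ≤ k) {a b : Fin n} (ha : (a : ℕ) = k - 3)
    (hb : (b : ℕ) = k) : betaRoot n k ∘ swap a b = gammaRoot n k 1 := by
  funext j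
  simp only [Function.comp_apply, betaRoot, gammaRoot, Fin.val_swap_apply, ha, hb]
  split_ifs <;> first | (exfalso; omega) | norm_num

theorem gammaRoot_comp_swap_mul_swap {n k d : ℕ} (hk : 3 ≤ k) (hd : 1 ≤ d)
    {a₁ b₁ a₂ b₂ : Fin n} (ha₁ : (a₁ : ℕ) = k - 2) (hb₁ : (b₁ : ℕ) = k + 2 * d - 1)
    (ha₂ : (a₂ : ℕ) = k - 1) (hb₂ : (b₂ : ℕ) = k + 2 * d) :
    gammaRoot n k d ∘ (swap a₁ b₁ * swap a₂ b₂) = gammaRoot n k (d + 1) - betaRoot n k := by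
  funext j
  have hσ : ((swap a₁ b₁ * swap a₂ b₂) j : ℕ) =
      if (j : ℕ) = k - 2 then k + 2 * d - 1 else if (j : ℕ) = k + 2 * d - 1 then k - 2
      else if (j : ℕ) = k - 1 then k + 2 * d else if (j : ℕ) = k + 2 * d then k - 1
      else j := by
    rw [Perm.mul_apply, Fin.val_swap_apply, Fin.val_swap_apply, ha₁, hb₁, ha₂, hb₂]
    split_ifs <;> omega
  simp only [gammaRoot, betaRoot, Pi.sub_apply, Function.comp_apply, hσ]
  split_ifs <;> first | (exfalso; omega) | (push_cast; ring1)

theorem gammaRoot_mem_realRoots {n k d : ℕ} (hk : 3 ≤ k) (hd : 1 ≤ d)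
    (hn : k + 2 * d - 1 ≤ n) : gammaRoot n k d ∈ realRoots n k := by
  induction d, hd using Nat.le_induction with
  | base =>
    rw [← betaRoot_comp_swap hk (a := ⟨k - 3, by omega⟩) (b := ⟨k, by omega⟩) rfl rfl]
    exact comp_perm_mem_realRoots _ ⟨1, one_mem _, rfl⟩
  | succ d hd ih =>
    have hperm := comp_perm_mem_realRoots
      (swap ⟨k - 2, by omega⟩ ⟨k + 2 * d - 1, by omega⟩ *
        swap ⟨k - 1, by omega⟩ ⟨k + 2 * d, by omega⟩) (ih (by omega))
    rw [gammaRoot_comp_swap_mul_swap hk hd rfl rfl rfl rfl] at hperm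
    have hr := rco_gammaRoot hk (by omega) hn
    simpa only [sBeta_sub_betaRoot (by omega) (by omega) hr] using
      sBeta_mem_realRoots (by omega) (by omega) hperm

theorem gammaRoot_is_real_root (n k d : ℕ) (hk : 3 ≤ k) (hd : 2 ≤ d)
    (hn : k + 2 * d - 1 ≤ n) :
    gammaRoot n k d ∈ realRoots n k ∧ degv n k (gammaRoot n k d) = (d : ℚ) :=
  ⟨gammaRoot_mem_realRoots hk (by omega) hn, degv_gammaRoot hk hn⟩
end

section
/- For all integers d, d' ≥ 2 with n ≥ k + 2·max(d, d') − 1, the inner product of the roots γ_d and γ_{d'} equals (γ_d, γ_{d'}) = 2 − |d − d'|, where γ_d ∈ ℤ^n is the vector whose first k−3 coordinates equal d, whose (k−2)-nd coordinate equals d−1, whose coordinates in positions k−1 through k+2d−1 equal 1, and whose remaining coordinates equal 0. -/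
open Finset

/-! The polarized form is `(x, y) = Σ xᵢ yᵢ + ((2 - k)/k²)(Σ xᵢ)(Σ yᵢ)`. Every `γ_d` is a step
function of the (0-based) index with coordinate sum `d k`, so the second term is `(2 - k) d d'`;
for `d ≤ d'` the coordinatewise product `γ_d γ_{d'}` is again a step function, with sum
`(k - 3) d d' + (d - 1)(d' - 1) + 2d + 1`. Adding up gives `2 - (d' - d)`. -/

def stepFun {M : Type*} [Zero M] (a b : ℕ) (A B C : M) (i : ℕ) : M :=
  if i < a then A else if i = a then B else if i < b then C else 0

lemma stepFun_mul_stepFun {R : Type*} [MulZeroClass R] {a b b' : ℕ} (hb : b ≤ b')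
    (A B C A' B' C' : R) (i : ℕ) :
    stepFun a b A B C i * stepFun a b' A' B' C' i = stepFun a b (A * A') (B * B') (C * C') i := by
  unfold stepFun
  split_ifs <;> first | rfl | omega | simp

lemma sum_range_stepFun {M : Type*} [AddCommMonoid M] {n a b : ℕ} (hab : a < b) (hb : b ≤ n)
    (A B C : M) :
    ∑ i ∈ range n, stepFun a b A B C i = a • A + B + (b - a - 1) • C := by
  have h₀ : ∀ i ∈ Ico b n, stepFun a b A B C i = 0 := fun i hi => by
    have := mem_Ico.1 hi
    simp only [stepFun]; split_ifs <;> first | rfl | omega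
  have hA : ∀ i ∈ range a, stepFun a b A B C i = A := fun i hi => if_pos (mem_range.1 hi)
  have hC : ∀ i ∈ Ico (a + 1) b, stepFun a b A B C i = C := fun i hi => by
    have := mem_Ico.1 hi
    simp only [stepFun]; split_ifs <;> first | rfl | omega
  rw [← sum_range_add_sum_Ico _ hb, ← sum_range_add_sum_Ico _ (Nat.succ_le_of_lt hab),
    sum_range_succ, sum_congr rfl h₀, sum_congr rfl hA, sum_congr rfl hC]
  simp [stepFun, Nat.sub_sub]

lemma ip_eq (n k : ℕ) (x y : Fin n → ℚ) :
    ip n k x y = ∑ i, x i * y i + (2 - k) / k ^ 2 * (∑ i, x i) * ∑ i, y i := by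
  simp only [ip, qform, Pi.add_apply, add_sq, mul_assoc, sum_add_distrib, ← mul_sum]
  ring

lemma ip_comm (n k : ℕ) (x y : Fin n → ℚ) : ip n k x y = ip n k y x := by
  simp only [ip_eq, mul_comm (x _), mul_right_comm _ (∑ i, x i)]

lemma gammaRoot_apply {n k : ℕ} (hk : 3 ≤ k) (d : ℕ) (j : Fin n) :
    gammaRoot n k d j = stepFun (k - 3) (k + 2 * d - 1) (d : ℚ) (d - 1) 1 j := by
  unfold gammaRoot stepFun
  split_ifs <;> first | rfl | omega

lemma sum_gammaRoot {n k : ℕ} (hk : 3 ≤ k) {d : ℕ} (hn : k + 2 * d - 1 ≤ n) :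
    ∑ i, gammaRoot n k d i = d * k := by
  simp only [gammaRoot_apply hk, Fin.sum_univ_eq_sum_range (stepFun _ _ _ _ _),
    sum_range_stepFun (by omega : k - 3 < k + 2 * d - 1) hn, nsmul_eq_mul]
  rw [show k + 2 * d - 1 - (k - 3) - 1 = 2 * d + 1 by omega, Nat.cast_sub hk]
  push_cast
  ring

lemma sum_gammaRoot_mul {n k : ℕ} (hk : 3 ≤ k) {d d' : ℕ} (hdd' : d ≤ d')
    (hn : k + 2 * d' - 1 ≤ n) :
    ∑ i, gammaRoot n k d i * gammaRoot n k d' i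
      = (k - 3) * d * d' + (d - 1) * (d' - 1) + (2 * d + 1) := by
  simp only [gammaRoot_apply hk, stepFun_mul_stepFun (by omega : k + 2 * d - 1 ≤ k + 2 * d' - 1),
    Fin.sum_univ_eq_sum_range (stepFun _ _ _ _ _),
    sum_range_stepFun (by omega : k - 3 < k + 2 * d - 1) (by omega : k + 2 * d - 1 ≤ n),
    nsmul_eq_mul]
  rw [show k + 2 * d - 1 - (k - 3) - 1 = 2 * d + 1 by omega, Nat.cast_sub hk]
  push_cast
  ring

lemma ip_gammaRoot_of_le {n k : ℕ} (hk : 3 ≤ k) {d d' : ℕ} (hdd' : d ≤ d')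
    (hn : k + 2 * d' - 1 ≤ n) :
    ip n k (gammaRoot n k d) (gammaRoot n k d') = 2 - (d' - d) := by
  have hk₀ : (k : ℚ) ≠ 0 := by positivity
  rw [ip_eq, sum_gammaRoot hk (by omega), sum_gammaRoot hk hn, sum_gammaRoot_mul hk hdd' hn]
  field_simp
  ring

theorem gammaRoot_inner_products_general (n k d d' : ℕ) (hk : 3 ≤ k)
    (hn : k + 2 * max d d' - 1 ≤ n) :
    ip n k (gammaRoot n k d) (gammaRoot n k d') = 2 - |(d : ℚ) - (d' : ℚ)| := by
  wlog h : d ≤ d' generalizing d d'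
  · rw [ip_comm, this d' d (max_comm d d' ▸ hn) (by omega), abs_sub_comm]
  rw [ip_gammaRoot_of_le hk h (by simpa [max_eq_right h] using hn),
    abs_of_nonpos (sub_nonpos.2 (Nat.cast_le.2 h))]
  ring

theorem gammaRoot_inner_products (n k d d' : ℕ) (hk : 3 ≤ k) (hd : 2 ≤ d) (hd' : 2 ≤ d')
    (hn : k + 2 * max d d' - 1 ≤ n) :
    ip n k (gammaRoot n k d) (gammaRoot n k d') = 2 - |(d : ℚ) - (d' : ℚ)| :=
  gammaRoot_inner_products_general n k d d' hk hn
end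

section
/- Let x ∈ ℤ^n with k dividing x_1+…+x_n, set d = (x_1+…+x_n)/k, and define x' ∈ ℤ^n by x'_i = d − x_{n+1−i} for i = 1,…,n. Then n−k divides x'_1+…+x'_n (indeed x'_1+…+x'_n = (n−k)·d), and q_{n−k}(x') = q_k(x), where for 1 ≤ m < n, q_m(y) = Σ_{i=1}^n y_i² + ((2−m)/m²)(Σ_{i=1}^n y_i)². -/
open Finset

/-
Write `d = (Σ xᵢ)/k` and `x'ᵢ = d - x_{n+1-i}`. Whenever `Σ yᵢ = m d` with `m ≠ 0`, the correction
term of `q_m` collapses to `(2 - m) d²`, so `q_m(y) = Σ yᵢ² + (2 - m) d²` depends on `m` only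
through that term. Applied to `x` with `m = k`, and to `x'` (whose coordinates sum to `(n - k) d`)
with `m = n - k`, both sides reduce to `Σ xᵢ² + (2 - k) d²`, because reversal preserves
`Σ xᵢ` and `Σ xᵢ²` and expanding the square gives `Σ x'ᵢ² = Σ xᵢ² + (n - 2k) d²`.
-/

section Reversal

theorem Fin.sum_comp_rev {M : Type*} [AddCommMonoid M] {n : ℕ} (f : Fin n → M) :
    ∑ i : Fin n, f i.rev = ∑ i, f i :=
  Equiv.sum_comp Fin.revPerm f

variable {R : Type*} [CommRing R] {n : ℕ}

theorem sum_const_sub_rev (d : R) (y : Fin n → R) :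
    ∑ i : Fin n, (d - y i.rev) = n * d - ∑ i, y i := by
  rw [sum_sub_distrib, Fin.sum_comp_rev y]
  simp

theorem sum_sq_const_sub_rev (d : R) (y : Fin n → R) :
    ∑ i : Fin n, (d - y i.rev) ^ 2 = n * d ^ 2 - 2 * d * ∑ i, y i + ∑ i, y i ^ 2 := by
  simp only [sub_sq, sum_add_distrib, sum_sub_distrib, ← mul_sum]
  rw [Fin.sum_comp_rev y, Fin.sum_comp_rev (y · ^ 2)]
  simp [mul_assoc]

end Reversal

theorem qform_of_sum_eq_mul {n m : ℕ} (hm : m ≠ 0) {y : Fin n → ℚ} {d : ℚ}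
    (hy : ∑ i, y i = m * d) : qform n m y = ∑ i, y i ^ 2 + (2 - m) * d ^ 2 := by
  have hm' : (m : ℚ) ≠ 0 := by exact_mod_cast hm
  rw [qform, hy]
  field_simp

theorem duality_k_and_n_sub_k_general (n k : ℕ) (hk : 1 ≤ k) (hkn : k ≤ n - 1)
    (x : Fin n → ℤ) (hdvd : (k : ℤ) ∣ ∑ i, x i) :
    (∑ i : Fin n, ((∑ j, x j) / (k : ℤ) - x i.rev)) =
        ((n : ℤ) - (k : ℤ)) * ((∑ j, x j) / (k : ℤ)) ∧
    qform n (n - k) (fun i => (((∑ j, x j) / (k : ℤ) - x i.rev : ℤ) : ℚ)) =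
      qform n k (fun i => (x i : ℚ)) := by
  obtain ⟨d, hd⟩ := hdvd
  have hk0 : (k : ℤ) ≠ 0 := by omega
  rw [hd, Int.mul_ediv_cancel_left _ hk0]
  have hsum : ∑ i : Fin n, (d - x i.rev) = ((n : ℤ) - k) * d := by
    rw [sum_const_sub_rev, hd]
    ring
  refine ⟨hsum, ?_⟩
  have hdQ : ∑ i, (x i : ℚ) = k * d := by exact_mod_cast hd
  have hsumQ : ∑ i : Fin n, ((d - x i.rev : ℤ) : ℚ) = ((n - k : ℕ) : ℚ) * d := by
    rw [Nat.cast_sub (by omega)]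
    exact_mod_cast hsum
  rw [qform_of_sum_eq_mul (by omega) hsumQ, qform_of_sum_eq_mul (by omega) hdQ]
  push_cast
  rw [sum_sq_const_sub_rev (d : ℚ) (fun i => (x i : ℚ)), hdQ, Nat.cast_sub (by omega)]
  ring

theorem duality_k_and_n_sub_k (n k : ℕ) (hn : 2 ≤ n) (hk : 1 ≤ k) (hkn : k ≤ n - 1)
    (x : Fin n → ℤ) (hdvd : (k : ℤ) ∣ ∑ i, x i) :
    (∑ i : Fin n, ((∑ j, x j) / (k : ℤ) - x i.rev)) =
        ((n : ℤ) - (k : ℤ)) * ((∑ j, x j) / (k : ℤ)) ∧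
    qform n (n - k) (fun i => (((∑ j, x j) / (k : ℤ) - x i.rev : ℤ) : ℚ)) =
      qform n k (fun i => (x i : ℚ)) :=
  duality_k_and_n_sub_k_general n k hk hkn x hdvd
end

section
/- Let x ∈ ℤ^n with k dividing x_1+…+x_n, set d = (x_1+…+x_n)/k, and assume d ≥ 1, d ≥ x_1 ≥ x_2 ≥ … ≥ x_n ≥ 0, and q(x) > 0. Then the number of indices i with 1 ≤ i ≤ k and x_i < d is at most 2d − 1, and the number of indices i with k < i ≤ n and x_i > 0 is at most 2d − 1. (Consequently x belongs to a natural root subsystem of type T_{2,2d−1,2d−1}, i.e. J_{2d−1,4d−2}.) -/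
open Finset

/-
Since `x₁ + ⋯ + xₙ = k d`, positivity of `q(x)` says exactly that `∑ xᵢ (d - xᵢ) < 2 d²`.
Sortedness forces `1 ≤ xᵢ` for `i ≤ k` and `xᵢ ≤ d - 1` for `i > k`. Fold the coordinates by
`yᵢ = d - xᵢ` for `i ≤ k` and `yᵢ = xᵢ` for `i > k`: then `0 ≤ yᵢ ≤ d - 1`, `xᵢ (d - xᵢ) = yᵢ (d - yᵢ)`,
and both blocks of `y` have the same sum. Each nonzero `yᵢ` in one block contributes at least
`d - 1` to `∑ yᵢ (d - yᵢ)`, and the other block contributes at least its sum, which is at least the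
number of nonzero `yᵢ` in the first block. Hence either count `m` satisfies `m d < 2 d²`.
-/

section Antitone

variable {n : ℕ} {x : Fin n → ℤ}

lemma sum_le_of_antitone {d : ℤ} (hx : Antitone x) (hle : ∀ j, x j ≤ d) (i : Fin n) :
    ∑ j, x j ≤ i * d + (n - i) * x i := by
  rw [← sum_add_sum_compl (Iio i) x]
  have hlow : ∑ j ∈ Iio i, x j ≤ #(Iio i) • d := sum_le_card_nsmul _ _ _ fun j _ => hle j
  have hhigh : ∑ j ∈ (Iio i)ᶜ, x j ≤ #(Iio i)ᶜ • x i :=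
    sum_le_card_nsmul _ _ _ fun j hj => hx (by simpa using hj)
  rw [Fin.card_Iio, nsmul_eq_mul] at hlow
  rw [card_compl, Fin.card_Iio, Fintype.card_fin, nsmul_eq_mul] at hhigh
  push_cast [Nat.cast_sub i.isLt.le] at hhigh
  linarith

lemma mul_le_sum_of_antitone (hx : Antitone x) (hnonneg : ∀ j, 0 ≤ x j) (i : Fin n) :
    ((i : ℤ) + 1) * x i ≤ ∑ j, x j :=
  calc ((i : ℤ) + 1) * x i = #(Iic i) • x i := by simp [Fin.card_Iic]
    _ ≤ ∑ j ∈ Iic i, x j := card_nsmul_le_sum _ _ _ fun j hj => hx (mem_Iic.1 hj)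
    _ ≤ ∑ j, x j := sum_le_sum_of_subset_of_nonneg (subset_univ _) fun j _ _ => hnonneg j

variable {k : ℕ} {d : ℤ}

lemma one_le_of_lt_of_sum_eq (hx : Antitone x) (hnonneg : ∀ j, 0 ≤ x j) (hle : ∀ j, x j ≤ d)
    (hsum : ∑ j, x j = k * d) (hd : 0 < d) {i : Fin n} (hi : (i : ℕ) < k) : 1 ≤ x i := by
  by_contra! h
  have hbound := sum_le_of_antitone hx hle i
  have hik : (i : ℤ) < k := by exact_mod_cast hi
  have hin : (i : ℤ) ≤ n := by exact_mod_cast i.isLt.le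
  nlinarith [hnonneg i]

lemma add_one_le_of_le_of_sum_eq (hx : Antitone x) (hnonneg : ∀ j, 0 ≤ x j)
    (hsum : ∑ j, x j = k * d) (hd : 0 < d) {i : Fin n} (hi : k ≤ (i : ℕ)) : x i + 1 ≤ d := by
  by_contra! h
  have hbound := mul_le_sum_of_antitone hx hnonneg i
  have hki : (k : ℤ) ≤ i := by exact_mod_cast hi
  have : ((i : ℤ) + 1) * d ≤ ((i : ℤ) + 1) * x i := by gcongr; omega
  nlinarith [mul_le_mul_of_nonneg_right hki hd.le]

end Antitone

lemma sum_mul_sub_lt_of_qform_pos {n k : ℕ} (hk : k ≠ 0) {x : Fin n → ℤ} {d : ℤ}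
    (hsum : ∑ i, x i = k * d) (hq : 0 < qform n k (fun i => (x i : ℚ))) :
    ∑ i, x i * (d - x i) < 2 * d ^ 2 := by
  have hsumQ : ∑ i, (x i : ℚ) = k * d := by exact_mod_cast hsum
  have hkQ : (k : ℚ) ≠ 0 := by exact_mod_cast hk
  have hqZ : 0 < ∑ i, x i ^ 2 + (2 - k) * d ^ 2 := by
    rw [qform, hsumQ, div_mul_eq_mul_div, mul_pow, mul_div_assoc,
      mul_div_cancel_left₀ _ (pow_ne_zero 2 hkQ)] at hq
    exact_mod_cast hq
  have hsplit : ∑ i, x i * (d - x i) = d * ∑ i, x i - ∑ i, x i ^ 2 := by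
    rw [mul_sum, ← sum_sub_distrib]
    exact sum_congr rfl fun i _ => by ring
  rw [hsplit, hsum]
  linarith

section Folding

variable {ι : Type*} [Fintype ι] [DecidableEq ι] {y : ι → ℤ} {d : ℤ}

lemma card_filter_pos_mul_le_sum (s : Finset ι) (hy : ∀ i, 0 ≤ y i ∧ y i + 1 ≤ d)
    (hbal : ∑ i ∈ s, y i = ∑ i ∈ sᶜ, y i) :
    #{i ∈ s | 0 < y i} * d ≤ ∑ i, y i * (d - y i) := by
  set A := {i ∈ s | 0 < y i}
  have hA : (#A : ℤ) * (d - 1) ≤ ∑ i ∈ s, y i * (d - y i) :=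
    calc (#A : ℤ) * (d - 1) = #A • (d - 1) := by rw [nsmul_eq_mul]
      _ ≤ ∑ i ∈ A, y i * (d - y i) := card_nsmul_le_sum _ _ _ fun i hi => by
          have := (mem_filter.1 hi).2
          nlinarith [hy i]
      _ ≤ ∑ i ∈ s, y i * (d - y i) := sum_le_sum_of_subset_of_nonneg (filter_subset _ _)
          fun i _ _ => mul_nonneg (hy i).1 (by linarith [hy i])
  have hcard : (#A : ℤ) ≤ ∑ i ∈ s, y i :=
    calc (#A : ℤ) = #A • (1 : ℤ) := by simp
      _ ≤ ∑ i ∈ A, y i := card_nsmul_le_sum _ _ _ fun i hi => (mem_filter.1 hi).2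
      _ ≤ ∑ i ∈ s, y i := sum_le_sum_of_subset_of_nonneg (filter_subset _ _)
          fun i _ _ => (hy i).1
  have hcompl : ∑ i ∈ sᶜ, y i ≤ ∑ i ∈ sᶜ, y i * (d - y i) :=
    sum_le_sum fun i _ => by nlinarith [hy i]
  rw [← sum_add_sum_compl s]
  linarith

end Folding

lemma le_two_mul_sub_one_of_mul_lt {m d : ℤ} (hd : 0 < d) (h : m * d < 2 * d ^ 2) :
    m ≤ 2 * d - 1 := by
  nlinarith

section FoldHead

variable {n k : ℕ} {d : ℤ} {x : Fin n → ℤ}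

def foldHead (k : ℕ) (d : ℤ) (x : Fin n → ℤ) : Fin n → ℤ :=
  fun i => if (i : ℕ) < k then d - x i else x i

lemma foldHead_mul_sub (i : Fin n) :
    foldHead k d x i * (d - foldHead k d x i) = x i * (d - x i) := by
  unfold foldHead; split_ifs <;> ring

lemma foldHead_bounds (hx : Antitone x) (hnonneg : ∀ j, 0 ≤ x j) (hle : ∀ j, x j ≤ d)
    (hsum : ∑ j, x j = k * d) (hd : 0 < d) (i : Fin n) :
    0 ≤ foldHead k d x i ∧ foldHead k d x i + 1 ≤ d := by
  unfold foldHead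
  by_cases hi : (i : ℕ) < k
  · have := one_le_of_lt_of_sum_eq hx hnonneg hle hsum hd hi
    rw [if_pos hi]
    constructor <;> linarith [hle i]
  · rw [if_neg hi]
    exact ⟨hnonneg i, add_one_le_of_le_of_sum_eq hx hnonneg hsum hd (not_lt.1 hi)⟩

lemma sum_foldHead_eq_sum_compl (hkn : k ≤ n) (hsum : ∑ j, x j = k * d) :
    ∑ i ∈ univ.filter (fun i : Fin n => (i : ℕ) < k), foldHead k d x i =
      ∑ i ∈ (univ.filter fun i : Fin n => (i : ℕ) < k)ᶜ, foldHead k d x i := by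
  set s := univ.filter fun i : Fin n => (i : ℕ) < k
  have hs : ∑ i ∈ s, foldHead k d x i = ∑ i ∈ s, (d - x i) :=
    sum_congr rfl fun i hi => if_pos (mem_filter.1 hi).2
  have hsc : ∑ i ∈ sᶜ, foldHead k d x i = ∑ i ∈ sᶜ, x i :=
    sum_congr rfl fun i hi => if_neg (by simpa [s] using hi)
  have hcard : #s = k := by simp [s, Fin.card_filter_val_lt, hkn]
  rw [hs, hsc, sum_sub_distrib, sum_const, hcard, nsmul_eq_mul, ← hsum,
    ← sum_add_sum_compl s x]
  ring

lemma filter_lt_and_lt_eq_filter_foldHead_pos :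
    univ.filter (fun i : Fin n => (i : ℕ) < k ∧ x i < d) =
      (univ.filter fun i : Fin n => (i : ℕ) < k).filter (0 < foldHead k d x ·) := by
  ext i
  simp only [mem_filter, mem_univ, true_and]
  by_cases hi : (i : ℕ) < k <;> simp [foldHead, hi]

lemma filter_le_and_pos_eq_filter_foldHead_pos :
    univ.filter (fun i : Fin n => k ≤ (i : ℕ) ∧ 0 < x i) =
      (univ.filter fun i : Fin n => (i : ℕ) < k)ᶜ.filter (0 < foldHead k d x ·) := by
  ext i
  simp only [mem_filter, mem_compl, mem_univ, true_and, not_lt]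
  by_cases hi : k ≤ (i : ℕ) <;> simp [foldHead, hi, not_lt.2]

end FoldHead

theorem sorted_positive_element_small_support (n k : ℕ) (hk : 1 ≤ k) (hkn : k < n)
    (x : Fin n → ℤ) (hdvd : (k : ℤ) ∣ ∑ i, x i)
    (d : ℤ) (hd : d = (∑ i, x i) / (k : ℤ)) (hd1 : 1 ≤ d)
    (hmono : Antitone x)
    (hx1 : x ⟨0, by omega⟩ ≤ d)
    (hxn : 0 ≤ x ⟨n - 1, by omega⟩)
    (hq : 0 < qform n k (fun i => (x i : ℚ))) :
    ((Finset.univ.filter (fun i : Fin n => (i : ℕ) < k ∧ x i < d)).card : ℤ) ≤ 2 * d - 1 ∧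
    ((Finset.univ.filter (fun i : Fin n => k ≤ (i : ℕ) ∧ 0 < x i)).card : ℤ) ≤ 2 * d - 1 := by
  have hsum : ∑ i, x i = k * d := by rw [hd, Int.mul_ediv_cancel' hdvd]
  have hle : ∀ i, x i ≤ d := fun i => (hmono (Fin.le_def.2 (Nat.zero_le _))).trans hx1
  have hnonneg : ∀ i, 0 ≤ x i := fun i =>
    hxn.trans (hmono (Fin.le_def.2 (Nat.le_sub_one_of_lt i.isLt)))
  have hT : ∑ i, foldHead k d x i * (d - foldHead k d x i) < 2 * d ^ 2 := by
    simpa only [foldHead_mul_sub] using sum_mul_sub_lt_of_qform_pos (by omega) hsum hq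
  have hy := foldHead_bounds hmono hnonneg hle hsum (by omega)
  have hbal := sum_foldHead_eq_sum_compl hkn.le hsum
  rw [filter_lt_and_lt_eq_filter_foldHead_pos, filter_le_and_pos_eq_filter_foldHead_pos]
  constructor
  · exact le_two_mul_sub_one_of_mul_lt (by omega)
      ((card_filter_pos_mul_le_sum _ hy hbal).trans_lt hT)
  · refine le_two_mul_sub_one_of_mul_lt (by omega)
      ((card_filter_pos_mul_le_sum _ hy ?_).trans_lt hT)
    rw [compl_compl, hbal]
end
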